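/- arXiv:2512.04594 — 2 statements merged into one kernel-verified Lean document; each statement's English description precedes it below -/
import Mathlib

section
/- Let α, β, a, b, x be real numbers with 0 < α, 0 < β, αβ < 1, α < b - a. Set ε = (1/2)·min(b - a - α, α, 1/β - α). Then for every integer m there exists an integer n such that (n, m) is a good pair, (n, m+1) is not a good pair, and x - αn + m/β ∈ [a + ε, b - ε]. -/
/-- For every column index `m` there is a row `n` such that `(n, m)` is a good pair,
`(n, m+1)` is not good, and the argument `x - αn + m/β` lies in `[a + ε, b - ε]`,
where `ε = (1/2) min(b - a - α, α, 1/β - α)`. -/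
theorem stmt_1 (α β a b x : ℝ) (hα : 0 < α) (hβ : 0 < β) (hαβ : α * β < 1)
    (hab : α < b - a)
    (good : ℤ → ℤ → Prop)
    (hgood : ∀ n m : ℤ, good n m ↔ x - α * n + m / β ∈ Set.Ioo a b)
    (ε : ℝ) (hε : ε = (1 / 2) * min (b - a - α) (min α (1 / β - α))) :
    ∀ m : ℤ, ∃ n : ℤ, good n m ∧ ¬ good n (m + 1) ∧
      x - α * n + m / β ∈ Set.Icc (a + ε) (b - ε) := by
  intro m
  have hβα : 0 < 1 / β - α := by
    rw [sub_pos, lt_div_iff₀ hβ]; exact hαβ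
  set M := min (b - a - α) (min α (1 / β - α)) with hM
  have hM1 : M ≤ b - a - α := min_le_left _ _
  have hM2 : M ≤ α := le_trans (min_le_right _ _) (min_le_left _ _)
  have hM3 : M ≤ 1 / β - α := le_trans (min_le_right _ _) (min_le_right _ _)
  have hMpos : 0 < M := lt_min (by linarith) (lt_min hα hβα)
  have hεpos : 0 < ε := by rw [hε]; linarith
  have h2ε1 : 2 * ε ≤ b - a - α := by rw [hε]; linarith
  have h2ε3 : 2 * ε ≤ 1 / β - α := by rw [hε]; linarith
  set t := x + (m : ℝ) / β with ht
  refine ⟨⌈(t - b + ε) / α⌉, ?_, ?_, ?_⟩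
  · -- good
    rw [hgood]
    constructor
    · -- a < t - α n
      have h := Int.ceil_lt_add_one ((t - b + ε) / α)
      have : (⌈(t - b + ε) / α⌉ : ℝ) * α < ((t - b + ε) / α + 1) * α := by
        apply mul_lt_mul_of_pos_right h hα
      rw [add_mul, div_mul_cancel₀ _ (ne_of_gt hα)] at this
      have hy : b - ε - α < t - α * ⌈(t - b + ε) / α⌉ := by nlinarith
      have : a + ε ≤ b - ε - α := by linarith
      show a < x - α * ⌈(t - b + ε) / α⌉ + m / β
      have heq : x - α * ⌈(t - b + ε) / α⌉ + m / β = t - α * ⌈(t - b + ε) / α⌉ := by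
        rw [ht]; ring
      rw [heq]; linarith
    · have h := Int.le_ceil ((t - b + ε) / α)
      have : ((t - b + ε) / α) * α ≤ (⌈(t - b + ε) / α⌉ : ℝ) * α :=
        mul_le_mul_of_nonneg_right h (le_of_lt hα)
      rw [div_mul_cancel₀ _ (ne_of_gt hα)] at this
      show x - α * ⌈(t - b + ε) / α⌉ + m / β < b
      have heq : x - α * ⌈(t - b + ε) / α⌉ + m / β = t - α * ⌈(t - b + ε) / α⌉ := by
        rw [ht]; ring
      rw [heq]; linarith
  · -- not good at m+1
    rw [hgood]
    intro hmem
    have hlt := hmem.2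
    have h := Int.ceil_lt_add_one ((t - b + ε) / α)
    have hmul : (⌈(t - b + ε) / α⌉ : ℝ) * α < ((t - b + ε) / α + 1) * α :=
      mul_lt_mul_of_pos_right h hα
    rw [add_mul, div_mul_cancel₀ _ (ne_of_gt hα)] at hmul
    have heq : x - α * ⌈(t - b + ε) / α⌉ + ((m : ℤ) + 1 : ℤ) / β
        = t - α * ⌈(t - b + ε) / α⌉ + 1 / β := by
      push_cast; rw [ht]; field_simp; ring
    rw [heq] at hlt
    nlinarith
  · constructor
    · have h := Int.ceil_lt_add_one ((t - b + ε) / α)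
      have hmul : (⌈(t - b + ε) / α⌉ : ℝ) * α < ((t - b + ε) / α + 1) * α :=
        mul_lt_mul_of_pos_right h hα
      rw [add_mul, div_mul_cancel₀ _ (ne_of_gt hα)] at hmul
      have heq : x - α * ⌈(t - b + ε) / α⌉ + m / β = t - α * ⌈(t - b + ε) / α⌉ := by
        rw [ht]; ring
      rw [heq]; linarith
    · have h := Int.le_ceil ((t - b + ε) / α)
      have hmul : ((t - b + ε) / α) * α ≤ (⌈(t - b + ε) / α⌉ : ℝ) * α :=
        mul_le_mul_of_nonneg_right h (le_of_lt hα)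
      rw [div_mul_cancel₀ _ (ne_of_gt hα)] at hmul
      have heq : x - α * ⌈(t - b + ε) / α⌉ + m / β = t - α * ⌈(t - b + ε) / α⌉ := by
        rw [ht]; ring
      rw [heq]; linarith
end

section
/- Let α, β > 0 with αβ irrational, let I ⊆ (0, α) be a nonempty open interval, and let x ∈ I. Then for any integers N₀, M₀ there exist integers n > N₀ and m > M₀ such that x - αn + m/β ∈ I. -/
open Set

/-- Arbitrarily small positive elements of `ℤγ + ℤ` when `γ` is irrational. -/
private lemma exists_small_combo (γ : ℝ) (hirr : Irrational γ) {δ : ℝ} (hδ : 0 < δ) :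
    ∃ p q : ℤ, 0 < p * γ + q ∧ p * γ + q < δ := by
  set S : AddSubgroup ℝ := AddSubgroup.closure {γ, 1} with hS
  have hdense : Dense (S : Set ℝ) := by
    rcases S.dense_or_cyclic with h | ⟨a, ha⟩
    · exact h
    · exfalso
      have hγ : γ ∈ S := AddSubgroup.subset_closure (by simp)
      have h1 : (1 : ℝ) ∈ S := AddSubgroup.subset_closure (by simp)
      rw [ha, AddSubgroup.mem_closure_singleton] at hγ h1
      obtain ⟨n, hn⟩ := hγ
      obtain ⟨m, hm⟩ := h1
      have hm0 : (m : ℝ) ≠ 0 := by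
        rintro h
        rw [zsmul_eq_mul, h, zero_mul] at hm
        exact one_ne_zero hm.symm
      refine hirr ⟨(n : ℚ) / m, ?_⟩
      rw [zsmul_eq_mul] at hn hm
      have key : γ * m = n := by linear_combination (-(m:ℝ)) * hn + (n:ℝ) * hm
      push_cast
      rw [div_eq_iff hm0]
      exact key.symm
  obtain ⟨g, hgS, hg⟩ := hdense.exists_mem_open isOpen_Ioo (nonempty_Ioo.2 hδ)
  have : g ∈ AddSubgroup.closure ({γ, 1} : Set ℝ) := hgS
  rw [AddSubgroup.mem_closure_pair] at this
  obtain ⟨p, q, hpq⟩ := this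
  refine ⟨p, q, ?_, ?_⟩
  · calc (0:ℝ) < g := hg.1
      _ = p * γ + q := by rw [← hpq]; push_cast [zsmul_eq_mul]; ring
  · calc (p:ℝ) * γ + q = g := by rw [← hpq]; push_cast [zsmul_eq_mul]; ring
      _ < δ := hg.2

/-- Multiples of a small positive step hit every interval of length `> g` in `[0, ∞)`. -/
private lemma exists_nat_mul_mem {L g ε : ℝ} (hL : 0 ≤ L) (hg : 0 < g) (hgε : g < ε) :
    ∃ k : ℕ, L < k * g ∧ (k : ℝ) * g < L + ε := by
  have hj : (0 : ℤ) ≤ ⌊L / g⌋ := Int.floor_nonneg.2 (div_nonneg hL hg.le)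
  have h2 : ((⌊L / g⌋.toNat + 1 : ℕ) : ℝ) = (⌊L / g⌋ : ℝ) + 1 := by
    rw [Nat.cast_add, Nat.cast_one, ← Int.cast_natCast, Int.toNat_of_nonneg hj]
  refine ⟨⌊L / g⌋.toNat + 1, ?_, ?_⟩
  · rw [h2]
    have : L / g < (⌊L / g⌋ : ℝ) + 1 := Int.lt_floor_add_one _
    calc L = (L / g) * g := by field_simp
      _ < ((⌊L / g⌋ : ℝ) + 1) * g := by
        exact mul_lt_mul_of_pos_right this hg
  · rw [h2]
    have h3 : (⌊L / g⌋ : ℝ) ≤ L / g := Int.floor_le _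
    calc ((⌊L / g⌋ : ℝ) + 1) * g ≤ (L / g + 1) * g := by
          exact mul_le_mul_of_nonneg_right (by linarith) hg.le
      _ = L + g := by field_simp
      _ < L + ε := by linarith

/-- Key step: for irrational positive `γ` and an interval `(a, b)` with `a < 0 < b`,
there are `n > N₀`, `m > M₀` with `m - n γ ∈ (a, b)`. -/
private lemma key (γ : ℝ) (hγ : 0 < γ) (hirr : Irrational γ) {a b : ℝ}
    (ha : a < 0) (hb : 0 < b) (N₀ M₀ : ℤ) :
    ∃ n m : ℤ, N₀ < n ∧ M₀ < m ∧ a < (m : ℝ) - n * γ ∧ (m : ℝ) - n * γ < b := by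
  have hab : a < b := ha.trans hb
  have hδ : 0 < min (b - a) 1 := lt_min (by linarith) one_pos
  obtain ⟨p, q, hg0, hgδ⟩ := exists_small_combo γ hirr hδ
  set g : ℝ := p * γ + q with hgdef
  have hgba : g < b - a := lt_of_lt_of_le hgδ (min_le_left _ _)
  set N : ℤ := max N₀ ⌈(M₀ - a) / γ⌉ with hN
  set t0 : ℝ := ((N : ℝ) + 1) * γ with ht0
  -- For any n ≥ N + 1: n > N₀ and n * γ + a > M₀
  have hNγ : (M₀ : ℝ) - a ≤ (N : ℝ) * γ := by
    have h1 : ((M₀ : ℝ) - a) / γ ≤ (⌈(M₀ - a) / γ⌉ : ℝ) := by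
      exact_mod_cast Int.le_ceil _
    have h2 : ((⌈(M₀ - a) / γ⌉ : ℤ) : ℝ) ≤ (N : ℝ) := by
      exact_mod_cast le_max_right N₀ ⌈(M₀ - a) / γ⌉
    calc (M₀ : ℝ) - a = ((M₀ : ℝ) - a) / γ * γ := by field_simp
      _ ≤ (N : ℝ) * γ := mul_le_mul_of_nonneg_right (h1.trans h2) hγ.le
  have hfin : ∀ n m : ℤ, N + 1 ≤ n → a < (m : ℝ) - n * γ → (m : ℝ) - n * γ < b →
      N₀ < n ∧ M₀ < m ∧ a < (m : ℝ) - n * γ ∧ (m : ℝ) - n * γ < b := by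
    intro n m hn hma hmb
    refine ⟨?_, ?_, hma, hmb⟩
    · calc N₀ ≤ N := le_max_left _ _
        _ < N + 1 := by linarith
        _ ≤ n := hn
    · have hnr : (N : ℝ) + 1 ≤ (n : ℝ) := by exact_mod_cast hn
      have : (M₀ : ℝ) < m := by
        have h3 : t0 ≤ n * γ := by
          rw [ht0]; exact mul_le_mul_of_nonneg_right hnr hγ.le
        have : (M₀ : ℝ) < (N : ℝ) * γ + γ + a := by nlinarith
        nlinarith [ht0]
      exact_mod_cast this
  rcases le_or_gt 0 p with hp | hp
  · -- p ≥ 0 : n = N + 1 + k p, m = M - k q with M just above t0 + b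
    set M : ℤ := ⌊t0 + b⌋ + 1 with hM
    have hL : (0 : ℝ) ≤ (M : ℝ) - t0 - b := by
      have := Int.lt_floor_add_one (t0 + b)
      push_cast [hM]; linarith
    obtain ⟨k, hk1, hk2⟩ := exists_nat_mul_mem hL hg0 hgba
    refine ⟨N + 1 + k * p, M - k * q, ?_⟩
    have hval : ((M - k * q : ℤ) : ℝ) - ((N + 1 + k * p : ℤ) : ℝ) * γ
        = (M : ℝ) - t0 - k * g := by
      push_cast [hgdef, ht0]; ring
    have hn' : N + 1 ≤ N + 1 + k * p := by
      have : (0:ℤ) ≤ (k:ℤ) * p := mul_nonneg (Int.ofNat_nonneg k) hp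
      omega
    refine hfin _ _ hn' ?_ ?_ <;> rw [hval] <;> linarith
  · -- p < 0 : n = N + 1 - k p, m = M + k q with M just below t0 + a
    set M : ℤ := ⌊t0 + a⌋ with hM
    have hL : (0 : ℝ) ≤ t0 + a - (M : ℝ) := by
      have := Int.floor_le (t0 + a)
      push_cast [hM]; linarith
    obtain ⟨k, hk1, hk2⟩ := exists_nat_mul_mem hL hg0 hgba
    refine ⟨N + 1 - k * p, M + k * q, ?_⟩
    have hval : ((M + k * q : ℤ) : ℝ) - ((N + 1 - k * p : ℤ) : ℝ) * γ
        = (M : ℝ) - t0 + k * g := by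
      push_cast [hgdef, ht0]; ring
    have hn : N + 1 ≤ N + 1 - k * p := by
      have : k * p ≤ 0 := mul_nonpos_of_nonneg_of_nonpos (Int.ofNat_nonneg k) hp.le
      omega
    refine hfin _ _ hn ?_ ?_ <;> rw [hval] <;> linarith

/-- Let `αβ` be irrational, `I = (c, d)` a nonempty open subinterval of `(0, α)` and
`x ∈ I`. Then for any integers `N₀, M₀` there are integers `n > N₀`, `m > M₀` with
`x - αn + m/β ∈ I`. -/
theorem stmt_5 (α β : ℝ) (hα : 0 < α) (hβ : 0 < β) (hirr : Irrational (α * β))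
    (c d : ℝ) (hcd : c < d) (hI : Set.Ioo c d ⊆ Set.Ioo 0 α)
    (x : ℝ) (hx : x ∈ Set.Ioo c d) :
    ∀ N₀ M₀ : ℤ, ∃ n m : ℤ, N₀ < n ∧ M₀ < m ∧ x - α * n + m / β ∈ Set.Ioo c d := by
  intro N₀ M₀
  have hγ : 0 < α * β := mul_pos hα hβ
  have ha : β * (c - x) < 0 := mul_neg_of_pos_of_neg hβ (by linarith [hx.1])
  have hb : 0 < β * (d - x) := mul_pos hβ (by linarith [hx.2])
  obtain ⟨n, m, hn, hm, h1, h2⟩ := key (α * β) hγ hirr ha hb N₀ M₀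
  have heq : x - α * n + m / β = x + ((m : ℝ) - n * (α * β)) / β := by
    field_simp; ring
  have h1' : c - x < ((m : ℝ) - n * (α * β)) / β := by
    rw [lt_div_iff₀ hβ]; linarith [h1]
  have h2' : ((m : ℝ) - n * (α * β)) / β < d - x := by
    rw [div_lt_iff₀ hβ]; linarith [h2]
  exact ⟨n, m, hn, hm, by rw [heq]; constructor <;> linarith⟩
end
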